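/- arXiv:0908.0670 — 2 statements merged into one kernel-verified Lean document; each statement's English description precedes it below -/
import Mathlib

section
/- For integers r ≥ 2 and p, q ≥ 1, ∑_{l,m,n≥1} 1/((l+m+n)^r l^p m^q) = ∑_{τ=0}^{q-1} C(p-1+τ, τ) ζ(r, p+τ, q-τ) + ∑_{τ=0}^{p-1} C(q-1+τ, τ) ζ(r, q+τ, p-τ). -/
/-!
Euler's partial-fraction decomposition
`1/(x^(p+1) y^(q+1)) = ∑_{τ ≤ q} C(p+τ, τ) / ((x+y)^(p+1+τ) y^(q+1-τ))
  + ∑_{τ ≤ p} C(q+τ, τ) / ((x+y)^(q+1+τ) x^(p+1-τ))`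
follows by induction on `p + q` from `1/(xy) = (1/x + 1/y)/(x+y)` and Pascal's rule. Applied with
`x = l+1`, `y = m+1` and multiplied by `(l+m+n+3)^(-r)`, it splits each summand of the left-hand
side into summands of triple zeta values with `(m₁, m₂, m₃) = (l+m+n+3, l+m+2, m+1)` or
`(l+m+n+3, l+m+2, l+1)`. In `ℝ≥0∞` the resulting nested sums may be reordered freely, which gives
the identity there; it descends to `ℝ` because `ζ(k₁, k₂, k₃) ≤ ζ(2, 1, 1) < ∞` for `k₁ ≥ 2`,
`k₂, k₃ ≥ 1`, by two applications of `∑_{m > N} 1/m² ≤ 1/N` and `ζ(2) < ∞`.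
-/

/-- The triple zeta value `ζ(k₁, k₂, k₃) = ∑_{m₁ > m₂ > m₃ > 0} m₁^{-k₁} m₂^{-k₂} m₃^{-k₃}`,
parametrized by `m₃ = c + 1`, `m₂ = b + c + 2`, `m₁ = a + b + c + 3`. -/
noncomputable def zeta3 (k₁ k₂ k₃ : ℕ) : ℝ :=
  ∑' (a : ℕ) (b : ℕ) (c : ℕ),
    1 / (((a : ℝ) + (b : ℝ) + (c : ℝ) + 3) ^ k₁ *
         ((b : ℝ) + (c : ℝ) + 2) ^ k₂ * ((c : ℝ) + 1) ^ k₃)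

open Finset

section Euler

variable {K : Type*} [Field K]

def eulerSum (s y : K) (p q : ℕ) : K :=
  ∑ τ ∈ range (q + 1), ((p + τ).choose τ : K) / (s ^ (p + 1 + τ) * y ^ (q + 1 - τ))

lemma eulerSum_succ_zero (s y : K) (p : ℕ) : eulerSum s y (p + 1) 0 = eulerSum s y p 0 / s := by
  simp only [eulerSum, zero_add, sum_range_one, Nat.choose_zero_right]
  ring

lemma eulerSum_zero_succ (s y : K) (q : ℕ) :
    eulerSum s y 0 (q + 1) = (1 / y ^ (q + 2) + eulerSum s y 0 q) / s := by
  simp only [eulerSum, Nat.choose_self, zero_add]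
  rw [sum_range_succ', add_comm, add_div, sum_div]
  congr 1
  · simp [div_eq_mul_inv]
  · refine sum_congr rfl fun τ _ => ?_
    rw [show q + 1 + 1 - (τ + 1) = q + 1 - τ by omega]
    ring

lemma eulerSum_succ_succ (s y : K) (p q : ℕ) :
    eulerSum s y (p + 1) (q + 1) = (eulerSum s y p (q + 1) + eulerSum s y (p + 1) q) / s := by
  have pascal (τ : ℕ) : ((p + 1 + (τ + 1)).choose (τ + 1) : K) =
      (p + (τ + 1)).choose (τ + 1) + (p + 1 + τ).choose τ := by
    rw [show p + 1 + (τ + 1) = p + 1 + τ + 1 by omega, Nat.choose_succ_succ', add_comm (_ : ℕ),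
      show p + 1 + τ = p + (τ + 1) by omega]
    push_cast; ring
  rw [eulerSum, sum_range_succ', sum_congr rfl fun τ _ => by rw [pascal τ]]
  simp only [add_div, sum_add_distrib, Nat.add_sub_add_right]
  rw [eulerSum, eulerSum, sum_range_succ' _ (q + 1), add_div, sum_div, sum_div,
    add_right_comm]
  simp only [Nat.add_sub_add_right]
  congr 1
  · congr 1
    · exact sum_congr rfl fun τ _ => by ring
    · simp only [add_zero, Nat.choose_zero_right]; ring
  · exact sum_congr rfl fun τ _ => by ring

lemma one_div_pow_succ_mul_pow_succ {x y : K} (hx : x ≠ 0) (hy : y ≠ 0) (hxy : x + y ≠ 0)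
    (a b : ℕ) :
    1 / (x ^ (a + 1) * y ^ (b + 1)) =
      (1 / (x ^ a * y ^ (b + 1)) + 1 / (x ^ (a + 1) * y ^ b)) / (x + y) := by
  field_simp
  ring

theorem one_div_mul_pow_eq_eulerSum {x y : K} (hx : x ≠ 0) (hy : y ≠ 0) (hxy : x + y ≠ 0)
    (q : ℕ) : 1 / (x * y ^ (q + 1)) = eulerSum (x + y) y 0 q + eulerSum (x + y) x q 0 := by
  induction q with
  | zero =>
    simp only [eulerSum, zero_add, sum_range_one, Nat.choose_zero_right]
    field_simp
    ring
  | succ q ih =>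
    have h := one_div_pow_succ_mul_pow_succ hx hy hxy 0 (q + 1)
    rw [pow_zero, one_mul, zero_add, pow_one] at h
    rw [h, ih, eulerSum_zero_succ, eulerSum_succ_zero]
    ring

theorem one_div_pow_mul_pow_eq_eulerSum {x y : K} (hx : x ≠ 0) (hy : y ≠ 0) (hxy : x + y ≠ 0)
    (p q : ℕ) :
    1 / (x ^ (p + 1) * y ^ (q + 1)) = eulerSum (x + y) y p q + eulerSum (x + y) x q p := by
  induction p generalizing q with
  | zero => simpa using one_div_mul_pow_eq_eulerSum hx hy hxy q
  | succ p ihp =>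
    induction q with
    | zero =>
      rw [add_comm (eulerSum _ y _ _), add_comm x y, pow_one, mul_comm]
      exact one_div_mul_pow_eq_eulerSum hy hx (by rwa [add_comm]) (p + 1)
    | succ q ihq =>
      rw [one_div_pow_succ_mul_pow_succ hx hy hxy, ihp, ihq, eulerSum_succ_succ,
        eulerSum_succ_succ]
      ring

end Euler

open scoped ENNReal

section Rearrangement

variable {α β γ : Type*}

lemma ENNReal.tsum_rotate₃ (f : α → β → γ → ℝ≥0∞) :
    ∑' (a : α) (b : β) (c : γ), f a b c = ∑' (c : γ) (a : α) (b : β), f a b c :=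
  (tsum_congr fun _ => ENNReal.tsum_comm).trans ENNReal.tsum_comm

lemma ENNReal.tsum_reverse₃ (f : α → β → γ → ℝ≥0∞) :
    ∑' (a : α) (b : β) (c : γ), f a b c = ∑' (c : γ) (b : β) (a : α), f a b c :=
  (ENNReal.tsum_rotate₃ f).trans (tsum_congr fun _ => ENNReal.tsum_comm)

lemma tsum₃_eq_toReal_tsum₃_ofReal {f : α → β → γ → ℝ} (hf : ∀ a b c, 0 ≤ f a b c)
    (h : ∑' (a : α) (b : β) (c : γ), ENNReal.ofReal (f a b c) ≠ ∞) :
    ∑' (a : α) (b : β) (c : γ), f a b c =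
      (∑' (a : α) (b : β) (c : γ), ENNReal.ofReal (f a b c)).toReal := by
  have h₂ : ∀ a, ∑' (b : β) (c : γ), ENNReal.ofReal (f a b c) ≠ ∞ :=
    fun a => ne_top_of_le_ne_top h (ENNReal.le_tsum a)
  have h₃ : ∀ a b, ∑' c : γ, ENNReal.ofReal (f a b c) ≠ ∞ :=
    fun a b => ne_top_of_le_ne_top (h₂ a) (ENNReal.le_tsum b)
  rw [ENNReal.tsum_toReal_eq h₂]
  refine tsum_congr fun a => ?_
  rw [ENNReal.tsum_toReal_eq (h₃ a)]
  refine tsum_congr fun b => ?_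
  rw [ENNReal.tsum_toReal_eq fun _ => ENNReal.ofReal_ne_top]
  exact tsum_congr fun c => (ENNReal.toReal_ofReal (hf a b c)).symm

lemma ENNReal.tsum₃_sum_mul {ι : Type*} (s : Finset ι) (c : ι → ℝ≥0∞)
    (F : ι → α → β → γ → ℝ≥0∞) :
    ∑' (a : α) (b : β) (d : γ), ∑ τ ∈ s, c τ * F τ a b d =
      ∑ τ ∈ s, c τ * ∑' (a : α) (b : β) (d : γ), F τ a b d := by
  simp_rw [Summable.tsum_finsetSum fun _ _ => ENNReal.summable, ENNReal.tsum_mul_left]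

lemma ENNReal.ofReal_sum_natCast_mul {ι : Type*} (s : Finset ι) (c : ι → ℕ) {g : ι → ℝ}
    (hg : ∀ τ, 0 ≤ g τ) :
    ENNReal.ofReal (∑ τ ∈ s, (c τ : ℝ) * g τ) = ∑ τ ∈ s, (c τ : ℝ≥0∞) * ENNReal.ofReal (g τ) := by
  rw [ENNReal.ofReal_sum_of_nonneg fun τ _ => mul_nonneg (Nat.cast_nonneg _) (hg τ)]
  simp_rw [ENNReal.ofReal_mul (Nat.cast_nonneg _), ENNReal.ofReal_natCast]

end Rearrangement

noncomputable def zeta3Summand (k₁ k₂ k₃ a b c : ℕ) : ℝ :=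
  1 / (((a : ℝ) + b + c + 3) ^ k₁ * ((b : ℝ) + c + 2) ^ k₂ * ((c : ℝ) + 1) ^ k₃)

lemma zeta3Summand_nonneg (k₁ k₂ k₃ a b c : ℕ) : 0 ≤ zeta3Summand k₁ k₂ k₃ a b c := by
  unfold zeta3Summand; positivity

lemma zeta3Summand_le {k₁ k₂ k₃ : ℕ} (h₁ : 2 ≤ k₁) (h₂ : 1 ≤ k₂) (h₃ : 1 ≤ k₃) (a b c : ℕ) :
    zeta3Summand k₁ k₂ k₃ a b c ≤ zeta3Summand 2 1 1 a b c := by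
  unfold zeta3Summand
  gcongr <;> linarith

noncomputable def zeta3ENNReal (k₁ k₂ k₃ : ℕ) : ℝ≥0∞ :=
  ∑' (a : ℕ) (b : ℕ) (c : ℕ), ENNReal.ofReal (zeta3Summand k₁ k₂ k₃ a b c)

lemma tsum_ofReal_div_sq_le {t : ℝ} (ht : 0 < t) {w : ℝ} (hw : 0 ≤ w) :
    ∑' a : ℕ, ENNReal.ofReal (w / ((a : ℝ) + t + 1) ^ 2) ≤ ENNReal.ofReal (w / t) := by
  refine ENNReal.tsum_le_of_sum_range_le fun n => ?_
  rw [← ENNReal.ofReal_sum_of_nonneg fun a _ => by positivity]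
  refine ENNReal.ofReal_le_ofReal ?_
  have telescope (u : ℝ) (hu : 0 < u) : w / (u + 1) ^ 2 ≤ w / u - w / (u + 1) := by
    rw [show w / u - w / (u + 1) = w / (u * (u + 1)) by field_simp; ring]
    gcongr
    nlinarith
  calc ∑ a ∈ range n, w / ((a : ℝ) + t + 1) ^ 2
      ≤ ∑ a ∈ range n, (w / ((a : ℝ) + t) - w / (((a + 1 : ℕ) : ℝ) + t)) :=
        sum_le_sum fun a _ => by
          have h := telescope (a + t) (by positivity)
          push_cast
          rwa [add_right_comm (a : ℝ) 1 t]
    _ = w / t - w / (n + t) := by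
      rw [sum_range_sub' (fun i : ℕ => w / ((i : ℝ) + t))]
      simp
    _ ≤ w / t := sub_le_self _ (by positivity)

lemma zeta3ENNReal_two_one_one_ne_top : zeta3ENNReal 2 1 1 ≠ ∞ := by
  have summable : Summable fun c : ℕ => 1 / ((c : ℝ) + 1) ^ 2 := by
    simpa using (summable_nat_add_iff 1).mpr (Real.summable_one_div_nat_pow.mpr one_lt_two)
  refine ne_top_of_le_ne_top ?_ <| calc
    zeta3ENNReal 2 1 1 = ∑' (c : ℕ) (b : ℕ) (a : ℕ), ENNReal.ofReal (zeta3Summand 2 1 1 a b c) :=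
      ENNReal.tsum_reverse₃ _
    _ ≤ ∑' (c : ℕ) (b : ℕ), ENNReal.ofReal (1 / ((c : ℝ) + 1) / ((b : ℝ) + (c + 1) + 1) ^ 2) := by
      refine ENNReal.tsum_le_tsum fun c => ENNReal.tsum_le_tsum fun b => ?_
      convert tsum_ofReal_div_sq_le (t := b + c + 2) (w := 1 / ((b + c + 2) * (c + 1)))
        (by positivity) (by positivity) using 1
      · refine tsum_congr fun a => ?_
        unfold zeta3Summand
        congr 1
        field_simp
        ring
      · congr 1
        field_simp
        ring
    _ ≤ ∑' c : ℕ, ENNReal.ofReal (1 / ((c : ℝ) + 1) ^ 2) := by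
      refine ENNReal.tsum_le_tsum fun c => ?_
      convert tsum_ofReal_div_sq_le (t := c + 1) (w := 1 / (c + 1)) (by positivity) (by positivity)
        using 2
      field_simp
    _ = ENNReal.ofReal (∑' c : ℕ, 1 / ((c : ℝ) + 1) ^ 2) :=
      (ENNReal.ofReal_tsum_of_nonneg (fun c => by positivity) summable).symm
  exact ENNReal.ofReal_ne_top

lemma zeta3ENNReal_ne_top {k₁ k₂ k₃ : ℕ} (h₁ : 2 ≤ k₁) (h₂ : 1 ≤ k₂) (h₃ : 1 ≤ k₃) :
    zeta3ENNReal k₁ k₂ k₃ ≠ ∞ :=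
  ne_top_of_le_ne_top zeta3ENNReal_two_one_one_ne_top <|
    ENNReal.tsum_le_tsum fun a => ENNReal.tsum_le_tsum fun b => ENNReal.tsum_le_tsum fun c =>
      ENNReal.ofReal_le_ofReal (zeta3Summand_le h₁ h₂ h₃ a b c)

lemma zeta3_eq_toReal_zeta3ENNReal {k₁ k₂ k₃ : ℕ} (h : zeta3ENNReal k₁ k₂ k₃ ≠ ∞) :
    zeta3 k₁ k₂ k₃ = (zeta3ENNReal k₁ k₂ k₃).toReal :=
  tsum₃_eq_toReal_tsum₃_ofReal (zeta3Summand_nonneg k₁ k₂ k₃) h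

lemma sum_mul_zeta3ENNReal_ne_top {r : ℕ} (hr : 2 ≤ r) (s : Finset ℕ) (c k₂ k₃ : ℕ → ℕ)
    (h₂ : ∀ τ ∈ s, 1 ≤ k₂ τ) (h₃ : ∀ τ ∈ s, 1 ≤ k₃ τ) :
    ∑ τ ∈ s, (c τ : ℝ≥0∞) * zeta3ENNReal r (k₂ τ) (k₃ τ) ≠ ∞ :=
  ENNReal.sum_ne_top.mpr fun τ hτ => ENNReal.mul_ne_top (ENNReal.natCast_ne_top _)
    (zeta3ENNReal_ne_top hr (h₂ τ hτ) (h₃ τ hτ))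

lemma toReal_sum_mul_zeta3ENNReal {r : ℕ} (hr : 2 ≤ r) (s : Finset ℕ) (c k₂ k₃ : ℕ → ℕ)
    (h₂ : ∀ τ ∈ s, 1 ≤ k₂ τ) (h₃ : ∀ τ ∈ s, 1 ≤ k₃ τ) :
    (∑ τ ∈ s, (c τ : ℝ≥0∞) * zeta3ENNReal r (k₂ τ) (k₃ τ)).toReal =
      ∑ τ ∈ s, (c τ : ℝ) * zeta3 r (k₂ τ) (k₃ τ) := by
  have hfin τ (hτ : τ ∈ s) := zeta3ENNReal_ne_top hr (h₂ τ hτ) (h₃ τ hτ)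
  rw [ENNReal.toReal_sum fun τ hτ => ENNReal.mul_ne_top (ENNReal.natCast_ne_top _) (hfin τ hτ)]
  refine sum_congr rfl fun τ hτ => ?_
  rw [ENNReal.toReal_mul, ENNReal.toReal_natCast, zeta3_eq_toReal_zeta3ENNReal (hfin τ hτ)]

lemma one_div_pow_mul_pow_mul_pow_eq (r p q l m n : ℕ) :
    1 / (((l : ℝ) + m + n + 3) ^ r * ((l : ℝ) + 1) ^ (p + 1) * ((m : ℝ) + 1) ^ (q + 1)) =
      ∑ τ ∈ range (q + 1), ((p + τ).choose τ : ℝ) * zeta3Summand r (p + 1 + τ) (q + 1 - τ) n l m +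
        ∑ τ ∈ range (p + 1), ((q + τ).choose τ : ℝ) *
          zeta3Summand r (q + 1 + τ) (p + 1 - τ) n m l := by
  have h := one_div_pow_mul_pow_eq_eulerSum (x := (l : ℝ) + 1) (y := (m : ℝ) + 1)
    (by positivity) (by positivity) (by positivity) p q
  rw [mul_assoc, ← one_div_mul_one_div, h, mul_add, eulerSum, eulerSum, mul_sum, mul_sum]
  congr 1 <;> refine sum_congr rfl fun τ _ => ?_ <;> unfold zeta3Summand <;>
    simp only [div_eq_mul_inv, one_mul, mul_inv] <;> ring

theorem tsum_ofReal_eq_sum_zeta3ENNReal (r p q : ℕ) :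
    ∑' (l : ℕ) (m : ℕ) (n : ℕ), ENNReal.ofReal
        (1 / (((l : ℝ) + m + n + 3) ^ r * ((l : ℝ) + 1) ^ (p + 1) * ((m : ℝ) + 1) ^ (q + 1))) =
      ∑ τ ∈ range (q + 1), ((p + τ).choose τ : ℝ≥0∞) * zeta3ENNReal r (p + 1 + τ) (q + 1 - τ) +
      ∑ τ ∈ range (p + 1), ((q + τ).choose τ : ℝ≥0∞) * zeta3ENNReal r (q + 1 + τ) (p + 1 - τ) := by
  have nonneg (s : Finset ℕ) (c : ℕ → ℕ) (g : ℕ → ℝ) (hg : ∀ τ, 0 ≤ g τ) :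
      0 ≤ ∑ τ ∈ s, (c τ : ℝ) * g τ :=
    sum_nonneg fun τ _ => mul_nonneg (Nat.cast_nonneg _) (hg τ)
  have pointwise : ∀ l m n : ℕ, ENNReal.ofReal
      (1 / (((l : ℝ) + m + n + 3) ^ r * ((l : ℝ) + 1) ^ (p + 1) * ((m : ℝ) + 1) ^ (q + 1))) =
      ∑ τ ∈ range (q + 1), ((p + τ).choose τ : ℝ≥0∞) *
          ENNReal.ofReal (zeta3Summand r (p + 1 + τ) (q + 1 - τ) n l m) +
        ∑ τ ∈ range (p + 1), ((q + τ).choose τ : ℝ≥0∞) *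
          ENNReal.ofReal (zeta3Summand r (q + 1 + τ) (p + 1 - τ) n m l) := by
    intro l m n
    rw [one_div_pow_mul_pow_mul_pow_eq,
      ENNReal.ofReal_add (nonneg _ _ _ fun _ => zeta3Summand_nonneg ..)
        (nonneg _ _ _ fun _ => zeta3Summand_nonneg ..),
      ENNReal.ofReal_sum_natCast_mul _ _ fun _ => zeta3Summand_nonneg ..,
      ENNReal.ofReal_sum_natCast_mul _ _ fun _ => zeta3Summand_nonneg ..]
  simp_rw [pointwise, ENNReal.tsum_add, ENNReal.tsum₃_sum_mul]
  congr 1 <;> refine sum_congr rfl fun τ _ => congrArg _ ?_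
  · exact ENNReal.tsum_rotate₃ _
  · exact ENNReal.tsum_reverse₃ _

theorem A3_value_as_triple_zeta (r p q : ℕ) (hr : 2 ≤ r) (hp : 1 ≤ p) (hq : 1 ≤ q) :
    (∑' (l : ℕ) (m : ℕ) (n : ℕ),
      1 / (((l : ℝ) + (m : ℝ) + (n : ℝ) + 3) ^ r * ((l : ℝ) + 1) ^ p * ((m : ℝ) + 1) ^ q)) =
      (∑ τ ∈ Finset.range q, (Nat.choose (p - 1 + τ) τ : ℝ) * zeta3 r (p + τ) (q - τ)) +
      (∑ τ ∈ Finset.range p, (Nat.choose (q - 1 + τ) τ : ℝ) * zeta3 r (q + τ) (p - τ)) := by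
  obtain ⟨p, rfl⟩ := Nat.exists_eq_add_of_le' hp
  obtain ⟨q, rfl⟩ := Nat.exists_eq_add_of_le' hq
  have hk₂ (a : ℕ) (s : Finset ℕ) : ∀ τ ∈ s, 1 ≤ a + 1 + τ := fun _ _ => by omega
  have hk₃ (a : ℕ) : ∀ τ ∈ range (a + 1), 1 ≤ a + 1 - τ := fun τ hτ => by
    rw [mem_range] at hτ; omega
  have fin₁ := sum_mul_zeta3ENNReal_ne_top hr _ (fun τ => (p + τ).choose τ) _ _ (hk₂ p _) (hk₃ q)
  have fin₂ := sum_mul_zeta3ENNReal_ne_top hr _ (fun τ => (q + τ).choose τ) _ _ (hk₂ q _) (hk₃ p)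
  have hfin :=
    (tsum_ofReal_eq_sum_zeta3ENNReal r p q).trans_ne (ENNReal.add_ne_top.mpr ⟨fin₁, fin₂⟩)
  rw [tsum₃_eq_toReal_tsum₃_ofReal (fun _ _ _ => by positivity) hfin,
    tsum_ofReal_eq_sum_zeta3ENNReal, ENNReal.toReal_add fin₁ fin₂,
    toReal_sum_mul_zeta3ENNReal hr _ _ _ _ (hk₂ p _) (hk₃ q),
    toReal_sum_mul_zeta3ENNReal hr _ _ _ _ (hk₂ q _) (hk₃ p)]
  simp only [Nat.add_sub_cancel]
end

section
/- In ℚ⟨x, y⟩ with the shuffle product, for all positive integers p and q one has z_p ш z_q = ∑_{τ=0}^{q-1} C(p-1+τ, τ) z_{p+τ} z_{q-τ} + ∑_{τ=0}^{p-1} C(q-1+τ, τ) z_{q+τ} z_{p-τ}, where z_p = x^{p-1} y. -/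
/-- Words in the two letters `x` (encoded `true`) and `y` (encoded `false`). -/
abbrev Word : Type := List Bool

/-- The shuffle product on ℚ⟨x,y⟩, realized as the monoid algebra of words
with values in `Word →₀ ℚ`, defined recursively on words by
`1 ш w = w ш 1 = w` and `(u₁ w₁) ш (u₂ w₂) = u₁(w₁ ш u₂ w₂) + u₂(u₁ w₁ ш w₂)`. -/
noncomputable def sh : Word → Word → (Word →₀ ℚ)
  | [], w => Finsupp.single w 1
  | (a :: w₁), [] => Finsupp.single (a :: w₁) 1
  | (a :: w₁), (b :: w₂) =>
      Finsupp.mapDomain (a :: ·) (sh w₁ (b :: w₂)) +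
      Finsupp.mapDomain (b :: ·) (sh (a :: w₁) w₂)
  termination_by w v => w.length + v.length

/-- The word `z_p = x^{p-1} y`. -/
def zw (p : ℕ) : Word := List.replicate (p - 1) true ++ [false]

/-!
Write `x·` for prepending the letter `x`. For `p, q ≥ 2` the defining recursion of `ш` reads
`z_p ш z_q = x·(z_{p-1} ш z_q) + x·(z_p ш z_{q-1})`, and by Pascal's rule
`C(n, τ) = C(n-1, τ) + C(n-1, τ-1)` each of the two sums on the right-hand side obeys the same
recursion. The boundary case `p = 1` follows from `y ш x z_{q} = y x z_q + x·(y ш z_q)`.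
-/

open Finset Finsupp

lemma sh_nil_left (w : Word) : sh [] w = single w 1 := by
  rw [sh]

lemma sh_nil_right (w : Word) : sh w [] = single w 1 := by
  cases w <;> rw [sh]

lemma sh_cons_cons (a b : Bool) (w₁ w₂ : Word) :
    sh (a :: w₁) (b :: w₂) =
      mapDomain (a :: ·) (sh w₁ (b :: w₂)) + mapDomain (b :: ·) (sh (a :: w₁) w₂) := by
  rw [sh]

theorem sh_comm (w v : Word) : sh w v = sh v w := by
  induction h : w.length + v.length using Nat.strong_induction_on generalizing w v with
  | _ n ih =>
    match w, v with
    | [], v => rw [sh_nil_left, sh_nil_right]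
    | a :: w, [] => rw [sh_nil_left, sh_nil_right]
    | a :: w, b :: v =>
      rw [sh_cons_cons, sh_cons_cons, ih _ (by simp [← h]) w (b :: v) rfl,
        ih _ (by simp [← h]) (a :: w) v rfl, add_comm]

lemma zw_one : zw 1 = [false] := rfl

lemma zw_succ {p : ℕ} (hp : 1 ≤ p) : zw (p + 1) = true :: zw p := by
  obtain ⟨p, rfl⟩ := Nat.exists_eq_add_of_le' hp
  simp [zw, List.replicate_succ]

lemma mapDomain_cons_sum_zw_append (s : Finset ℕ) (c : ℕ → ℚ) (m n : ℕ → ℕ)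
    (hm : ∀ τ ∈ s, 1 ≤ m τ) :
    mapDomain (true :: ·) (∑ τ ∈ s, c τ • single (zw (m τ) ++ zw (n τ)) (1 : ℚ)) =
      ∑ τ ∈ s, c τ • single (zw (m τ + 1) ++ zw (n τ)) (1 : ℚ) := by
  rw [mapDomain_finsetSum]
  refine sum_congr rfl fun τ hτ => ?_
  rw [mapDomain_smul, mapDomain_single, zw_succ (hm τ hτ), List.cons_append]

noncomputable def halfShuffle (p q : ℕ) : Word →₀ ℚ :=
  ∑ τ ∈ range q, ((p - 1 + τ).choose τ : ℚ) • single (zw (p + τ) ++ zw (q - τ)) 1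

lemma halfShuffle_zero_right (p : ℕ) : halfShuffle p 0 = 0 := by
  simp [halfShuffle]

lemma halfShuffle_one_succ (q : ℕ) :
    halfShuffle 1 (q + 1) =
      single (zw 1 ++ zw (q + 1)) 1 + mapDomain (true :: ·) (halfShuffle 1 q) := by
  rw [halfShuffle, halfShuffle, mapDomain_cons_sum_zw_append _ _ _ _ fun τ _ => by omega,
    sum_range_succ', add_comm]
  refine congrArg₂ _ (by simp) (sum_congr rfl fun τ _ => ?_)
  rw [Nat.add_sub_add_right, show 1 + (τ + 1) = 1 + τ + 1 by omega]
  simp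

lemma halfShuffle_succ_succ {p : ℕ} (hp : 1 ≤ p) (q : ℕ) :
    halfShuffle (p + 1) (q + 1) =
      mapDomain (true :: ·) (halfShuffle p (q + 1)) +
        mapDomain (true :: ·) (halfShuffle (p + 1) q) := by
  obtain ⟨p, rfl⟩ := Nat.exists_eq_add_of_le' hp
  rw [halfShuffle, halfShuffle, halfShuffle,
    mapDomain_cons_sum_zw_append _ _ _ _ fun τ _ => by omega,
    mapDomain_cons_sum_zw_append _ _ _ _ fun τ _ => by omega,
    sum_range_succ', sum_range_succ' _ q]
  simp only [Nat.add_sub_cancel, Nat.add_sub_add_right, add_zero, Nat.choose_zero_right]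
  rw [add_right_comm (∑ τ ∈ range q, _), ← sum_add_distrib]
  refine congrArg₂ _ (sum_congr rfl fun τ _ => ?_) rfl
  rw [show p + 1 + (τ + 1) = p + τ + 1 + 1 by omega, Nat.choose_succ_succ', Nat.cast_add, add_smul,
    add_comm]
  ring_nf

lemma sh_zw_one_left {q : ℕ} (hq : 1 ≤ q) :
    sh (zw 1) (zw q) = halfShuffle 1 q + halfShuffle q 1 := by
  induction q, hq using Nat.le_induction with
  | base => simp [zw, sh_cons_cons, sh_nil_left, sh_nil_right, halfShuffle]
  | succ q hq ih =>
    rw [zw_succ hq, zw_one, sh_cons_cons, sh_nil_left, mapDomain_single, ← zw_succ hq, ← zw_one,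
      ih, halfShuffle_one_succ, halfShuffle_succ_succ hq 0, halfShuffle_zero_right,
      mapDomain_zero, add_zero, mapDomain_add, add_assoc]
    rfl

theorem shuffle_zp_zq (p q : ℕ) (hp : 1 ≤ p) (hq : 1 ≤ q) :
    sh (zw p) (zw q) =
      (∑ τ ∈ Finset.range q, (Nat.choose (p - 1 + τ) τ : ℚ) •
        Finsupp.single (zw (p + τ) ++ zw (q - τ)) (1 : ℚ)) +
      (∑ τ ∈ Finset.range p, (Nat.choose (q - 1 + τ) τ : ℚ) •
        Finsupp.single (zw (q + τ) ++ zw (p - τ)) (1 : ℚ)) := by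
  change sh (zw p) (zw q) = halfShuffle p q + halfShuffle q p
  induction p, hp using Nat.le_induction generalizing q with
  | base => exact sh_zw_one_left hq
  | succ p hp ih =>
    induction q, hq using Nat.le_induction with
    | base => rw [sh_comm, add_comm (halfShuffle _ _)]; exact sh_zw_one_left (by omega)
    | succ q hq ihq =>
      rw [zw_succ hp, zw_succ hq, sh_cons_cons, ← zw_succ hp, ← zw_succ hq, ih (q + 1) (by omega),
        ihq, halfShuffle_succ_succ hp, halfShuffle_succ_succ hq, mapDomain_add, mapDomain_add]
      abel
end
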